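/- Let G be a finite group, U ◁ G a normal subgroup, F a field, and V a finite-dimensional F[G]-module. Suppose P is an isomorphism-invariant property of irreducible F[U]-modules such that for all g ∈ G and all irreducible F[U]-subquotients A of V, the module gA has P if and only if A has P. If V = V⁺ ⊕ V⁻ is a decomposition into F[U]-submodules where every F[U]-composition factor of V⁺ has P, every F[U]-composition factor of V⁻ fails P, and moreover V⁺ (resp. V⁻) contains every F[U]-submodule of V all of whose composition factors have (resp. fail) P, then V⁺ and V⁻ are F[G]-submodules of V. -/

import Mathlib

/-!
Translation by `g ∈ G` maps `U`-submodules to `U`-submodules (as `U` is normal) and irreducible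
`U`-subquotients to irreducible ones, and by hypothesis it preserves `P` on them. Hence `g V⁺` is a
`U`-submodule all of whose composition factors have `P`, so `g V⁺ ≤ V⁺` by maximality; likewise
for `V⁻`.
-/

open Pointwise

section

variable {G : Type*} [Group G] {F : Type*} [Field F]
  {V : Type*} [AddCommGroup V] [Module F V] [DistribMulAction G V] [SMulCommClass G F V]

/-- `W` is stable under the subgroup `U`. -/
def UStab (U : Subgroup G) (W : Submodule F V) : Prop := ∀ u ∈ U, ∀ x ∈ W, u • x ∈ W

/-- The factor `N/N'` is an irreducible `F[U]`-module. -/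
def SimpleBtw (U : Subgroup G) (N' N : Submodule F V) : Prop :=
  N' ≠ N ∧ ∀ M : Submodule F V, N' ≤ M → M ≤ N → UStab U M → M = N' ∨ M = N

/-- Every `F[U]`-composition factor (irreducible `U`-subquotient) of `W` satisfies `P`. -/
def AllFactors (U : Subgroup G) (P : Submodule F V → Submodule F V → Prop)
    (W : Submodule F V) : Prop :=
  ∀ N' N : Submodule F V, N' ≤ N → N ≤ W → UStab U N' → UStab U N → SimpleBtw U N' N →
    P N' N

namespace Submodule

variable {α R M : Type*} [Group α] [Semiring R] [AddCommMonoid M] [Module R M]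
  [DistribMulAction α M] [SMulCommClass α R M]

theorem mem_pointwise_smul_iff_inv_smul_mem {a : α} {S : Submodule R M} {x : M} :
    x ∈ a • S ↔ a⁻¹ • x ∈ S := by
  rw [← SetLike.mem_coe, coe_pointwise_smul, Set.mem_smul_set_iff_inv_smul_mem, SetLike.mem_coe]

theorem pointwise_smul_le_iff {a : α} {S T : Submodule R M} : a • S ≤ T ↔ S ≤ a⁻¹ • T := by
  simp only [← SetLike.coe_subset_coe, coe_pointwise_smul,
    Set.smul_set_subset_iff_subset_inv_smul_set]

theorem le_pointwise_smul_iff {a : α} {S T : Submodule R M} : S ≤ a • T ↔ a⁻¹ • S ≤ T := by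
  simp only [← SetLike.coe_subset_coe, coe_pointwise_smul, Set.subset_smul_set_iff]

end Submodule

theorem UStab.smul {U : Subgroup G} (hU : U.Normal) (g : G) {W : Submodule F V}
    (hW : UStab U W) : UStab U (g • W) := by
  intro u hu x hx
  rw [Submodule.mem_pointwise_smul_iff_inv_smul_mem] at hx ⊢
  have hconj : g⁻¹ • u • x = (g⁻¹ * u * g) • g⁻¹ • x := by
    simp only [mul_smul, smul_inv_smul]
  rw [hconj]
  exact hW _ (by simpa using hU.conj_mem' u hu g) _ hx

theorem SimpleBtw.smul {U : Subgroup G} (hU : U.Normal) (g : G) {N' N : Submodule F V}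
    (h : SimpleBtw U N' N) : SimpleBtw U (g • N') (g • N) := by
  obtain ⟨hne, hmin⟩ := h
  refine ⟨(smul_left_cancel_iff g).not.mpr hne, fun M hN'M hMN hM => ?_⟩
  rw [Submodule.pointwise_smul_le_iff] at hN'M
  rw [Submodule.le_pointwise_smul_iff] at hMN
  simpa only [inv_smul_eq_iff] using hmin _ hN'M hMN (hM.smul hU g⁻¹)

theorem AllFactors.smul {U : Subgroup G} (hU : U.Normal)
    {Q : Submodule F V → Submodule F V → Prop}
    (hQ : ∀ (g : G) (N' N : Submodule F V), N' ≤ N → UStab U N' → UStab U N →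
      SimpleBtw U N' N → Q N' N → Q (g • N') (g • N))
    {W : Submodule F V} (hW : AllFactors U Q W) (g : G) : AllFactors U Q (g • W) := by
  intro N' N hN'N hNW hN' hN hS
  have hle : g⁻¹ • N' ≤ g⁻¹ • N := by
    rwa [Submodule.pointwise_smul_le_iff, inv_inv, smul_inv_smul]
  have hQ' := hQ g _ _ hle (hN'.smul hU g⁻¹) (hN.smul hU g⁻¹) (hS.smul hU g⁻¹)
    (hW _ _ hle (Submodule.le_pointwise_smul_iff.mp hNW) (hN'.smul hU g⁻¹)
      (hN.smul hU g⁻¹) (hS.smul hU g⁻¹))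
  simpa only [smul_inv_smul] using hQ'

theorem smul_mem_of_allFactors_maximal {U : Subgroup G} (hU : U.Normal)
    {Q : Submodule F V → Submodule F V → Prop}
    (hQ : ∀ (g : G) (N' N : Submodule F V), N' ≤ N → UStab U N' → UStab U N →
      SimpleBtw U N' N → Q N' N → Q (g • N') (g • N))
    {W : Submodule F V} (hWst : UStab U W) (hWfac : AllFactors U Q W)
    (hWmax : ∀ W' : Submodule F V, UStab U W' → AllFactors U Q W' → W' ≤ W)
    (g : G) {x : V} (hx : x ∈ W) : g • x ∈ W :=
  hWmax _ (hWst.smul hU g) (hWfac.smul hU hQ g) (Submodule.smul_mem_pointwise_smul x g W hx)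

theorem stmt9_general (U : Subgroup G) (hU : U.Normal)
    (P : Submodule F V → Submodule F V → Prop)
    (hP : ∀ (g : G) (N' N : Submodule F V), N' ≤ N → UStab U N' → UStab U N →
      SimpleBtw U N' N → (P (g • N') (g • N) ↔ P N' N))
    (Vp Vm : Submodule F V)
    (hVpst : UStab U Vp) (hVpfac : AllFactors U P Vp)
    (hVpmax : ∀ W : Submodule F V, UStab U W → AllFactors U P W → W ≤ Vp)
    (hVmst : UStab U Vm) (hVmfac : AllFactors U (fun N' N => ¬ P N' N) Vm)
    (hVmmax : ∀ W : Submodule F V, UStab U W →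
      AllFactors U (fun N' N => ¬ P N' N) W → W ≤ Vm) :
    (∀ g : G, ∀ x ∈ Vp, g • x ∈ Vp) ∧ (∀ g : G, ∀ x ∈ Vm, g • x ∈ Vm) :=
  ⟨fun g _ hx => smul_mem_of_allFactors_maximal hU
      (fun g N' N hle hN' hN hS => (hP g N' N hle hN' hN hS).mpr) hVpst hVpfac hVpmax g hx,
    fun g _ hx => smul_mem_of_allFactors_maximal hU
      (fun g N' N hle hN' hN hS => mt (hP g N' N hle hN' hN hS).mp) hVmst hVmfac hVmmax g hx⟩

/-- Let `U ◁ G`, let `V` be a finite-dimensional `F[G]`-module, and let `P N' N` be a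
property of irreducible `F[U]`-subquotients `N/N'` of `V` which is invariant under
translation by elements of `G` (the encoding of "`gA` has `P` iff `A` has `P`").  If
`V = V⁺ ⊕ V⁻` where `V⁺` (resp. `V⁻`) is `U`-stable with all `U`-composition factors
satisfying (resp. failing) `P` and contains every `U`-submodule with that property, then
`V⁺` and `V⁻` are `F[G]`-submodules of `V`. -/
theorem stmt9 [Finite G] [FiniteDimensional F V]
    (U : Subgroup G) (hU : U.Normal)
    (P : Submodule F V → Submodule F V → Prop)
    (hP : ∀ (g : G) (N' N : Submodule F V), N' ≤ N → UStab U N' → UStab U N →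
      SimpleBtw U N' N → (P (g • N') (g • N) ↔ P N' N))
    (Vp Vm : Submodule F V) (hcompl : IsCompl Vp Vm)
    (hVpst : UStab U Vp) (hVpfac : AllFactors U P Vp)
    (hVpmax : ∀ W : Submodule F V, UStab U W → AllFactors U P W → W ≤ Vp)
    (hVmst : UStab U Vm) (hVmfac : AllFactors U (fun N' N => ¬ P N' N) Vm)
    (hVmmax : ∀ W : Submodule F V, UStab U W →
      AllFactors U (fun N' N => ¬ P N' N) W → W ≤ Vm) :
    (∀ g : G, ∀ x ∈ Vp, g • x ∈ Vp) ∧ (∀ g : G, ∀ x ∈ Vm, g • x ∈ Vm) :=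
  stmt9_general U hU P hP Vp Vm hVpst hVpfac hVpmax hVmst hVmfac hVmmax

end
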